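/- arXiv:2406.00576 — 3 statements merged into one kernel-verified Lean document; each statement's English description precedes it below -/
import Mathlib

section
/- Let F, f : ℝ^d → ℝ be convex functions with F M-Lipschitz and f M-Lipschitz, and let δ > 0. Suppose F(x) ≤ f(x) + δ for all x, and f(x_t) ≤ F(x_t) + δ for finitely many points x_1,...,x_T. Define F'(x) = max{F(x), f(x) - δ}. Then F' is convex, M-Lipschitz, satisfies ‖F' - f‖_∞ ≤ δ, and for each t, F'(x_t) = F(x_t) and every subgradient of F at x_t is a subgradient of F' at x_t. -/
/-!
`F'` lies above `F` and coincides with it at every point where `f ≤ F + δ`, in particular at the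
query points, so supporting hyperplanes of `F` there support `F'` as well. A maximum of two
`M`-Lipschitz convex functions is `M`-Lipschitz and convex, and `F ≤ f + δ` pins `F'` to within
`δ` of `f`.
-/

open scoped RealInnerProductSpace

theorem abs_max_sub_max_sub_const_le {E : Type*} [SeminormedAddCommGroup E] {M c : ℝ}
    {F f : E → ℝ} (hF : ∀ x y, |F x - F y| ≤ M * ‖x - y‖)
    (hf : ∀ x y, |f x - f y| ≤ M * ‖x - y‖) (x y : E) :
    |max (F x) (f x - c) - max (F y) (f y - c)| ≤ M * ‖x - y‖ := by
  refine (abs_max_sub_max_le_max _ _ _ _).trans (max_le (hF x y) ?_)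
  rw [sub_sub_sub_cancel_right]
  exact hf x y

theorem abs_max_sub_sub_le {a b δ : ℝ} (hδ : 0 ≤ δ) (h : a ≤ b + δ) :
    |max a (b - δ) - b| ≤ δ := by
  rw [abs_le]
  constructor
  · linarith [le_max_right a (b - δ)]
  · linarith [max_le h (by linarith : b - δ ≤ b + δ)]

theorem subgradient_of_le_of_eq {E : Type*} [NormedAddCommGroup E] [InnerProductSpace ℝ E]
    {F G : E → ℝ} {x g : E} (hle : ∀ y, F y ≤ G y) (heq : G x = F x)
    (hg : ∀ y, F x + ⟪g, y - x⟫ ≤ F y) (y : E) : G x + ⟪g, y - x⟫ ≤ G y := by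
  rw [heq]
  exact (hg y).trans (hle y)

theorem stmt0 {d T : ℕ} (M δ : ℝ) (hδ : 0 < δ)
    (F f : EuclideanSpace ℝ (Fin d) → ℝ)
    (hFconv : ConvexOn ℝ Set.univ F) (hfconv : ConvexOn ℝ Set.univ f)
    (hFlip : ∀ x y, |F x - F y| ≤ M * ‖x - y‖)
    (hflip : ∀ x y, |f x - f y| ≤ M * ‖x - y‖)
    (hunder : ∀ x, F x ≤ f x + δ)
    (x : Fin T → EuclideanSpace ℝ (Fin d))
    (hquery : ∀ t, f (x t) ≤ F (x t) + δ)
    (F' : EuclideanSpace ℝ (Fin d) → ℝ)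
    (hF' : ∀ y, F' y = max (F y) (f y - δ)) :
    ConvexOn ℝ Set.univ F' ∧ (∀ y z, |F' y - F' z| ≤ M * ‖y - z‖) ∧
    (∀ y, |F' y - f y| ≤ δ) ∧
    ∀ t : Fin T, F' (x t) = F (x t) ∧
      ∀ g : EuclideanSpace ℝ (Fin d),
        (∀ y, F (x t) + ⟪g, y - x t⟫ ≤ F y) →
        (∀ y, F' (x t) + ⟪g, y - x t⟫ ≤ F' y) := by
  obtain rfl : F' = F ⊔ fun y => f y - δ := funext hF'
  have hagree (t : Fin T) : max (F (x t)) (f (x t) - δ) = F (x t) :=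
    max_eq_left (by linarith [hquery t])
  refine ⟨hFconv.sup (hfconv.sub (concaveOn_const δ convex_univ)),
    abs_max_sub_max_sub_const_le hFlip hflip,
    fun y => abs_max_sub_sub_le hδ.le (hunder y),
    fun t => ⟨hagree t, fun g hg => subgradient_of_le_of_eq (fun y => le_max_left _ _)
      (hagree t) hg⟩⟩
end

section
/- Let f : ℝ^d → ℝ be an α-smooth convex function (i.e., differentiable with ‖∇f(x)-∇f(y)‖ ≤ α‖x-y‖) and h : B(0,4R) → ℝ a convex function with ‖h - f‖_∞ ≤ ε on B(0,4R), where ε ≤ αR². Then for every x ∈ B(0,2R) and every subgradient g of h at x, ‖g - ∇f(x)‖ ≤ 2√(αε). -/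
/-! For `y` in the ball of radius `4R`, the subgradient inequality for `h`, the bound `|h - f| ≤ ε`
at `x` and `y`, and the quadratic upper bound of the `α`-smooth `f` give
`⟪g - ∇f x, y - x⟫ ≤ α/2 ‖y - x‖² + 2ε`. Taking `y - x` of length `t ≤ 2R` in the direction of
`g - ∇f x` yields `t ‖g - ∇f x‖ ≤ α t²/2 + 2ε`; the minimising choice `t = 2√(ε/α)` is admissible
because `ε ≤ αR²` and gives `‖g - ∇f x‖ ≤ 2√(αε)`. -/

open Metric Set Topology
open scoped RealInnerProductSpace

section InnerProductSpace

variable {E : Type*} [NormedAddCommGroup E] [InnerProductSpace ℝ E] [CompleteSpace E]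
  {f : E → ℝ} {α : ℝ}

theorem Differentiable.hasDerivAt_comp_add_smul (hf : Differentiable ℝ f) (x w : E) (s : ℝ) :
    HasDerivAt (fun s : ℝ => f (x + s • w)) ⟪gradient f (x + s • w), w⟫ s := by
  have hline : HasDerivAt (fun s : ℝ => x + s • w) w s := by
    simpa using ((hasDerivAt_id s).smul_const w).const_add x
  have := (hf (x + s • w)).hasFDerivAt.comp_hasDerivAt s hline
  rwa [← inner_gradient_left] at this

theorem Differentiable.le_add_inner_gradient_add_of_lipschitz_gradient (hf : Differentiable ℝ f)
    (hsmooth : ∀ x y, ‖gradient f x - gradient f y‖ ≤ α * ‖x - y‖) (x y : E) :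
    f y ≤ f x + ⟪gradient f x, y - x⟫ + α / 2 * ‖y - x‖ ^ 2 := by
  set w := y - x
  have hB (s : ℝ) : HasDerivAt (fun s : ℝ => f x + s * ⟪gradient f x, w⟫ + α / 2 * s ^ 2 * ‖w‖ ^ 2)
      (⟪gradient f x, w⟫ + α * s * ‖w‖ ^ 2) s := by
    refine ((((hasDerivAt_id s).mul_const ⟪gradient f x, w⟫).const_add (f x)).add
      (((hasDerivAt_pow 2 s).const_mul (α / 2)).mul_const (‖w‖ ^ 2))).congr_deriv ?_
    simp only [one_mul, Nat.cast_ofNat]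
    ring
  have bound : ∀ s ∈ Ico (0 : ℝ) 1,
      ⟪gradient f (x + s • w), w⟫ ≤ ⟪gradient f x, w⟫ + α * s * ‖w‖ ^ 2 := by
    rintro s ⟨hs0, -⟩
    have hlip := hsmooth (x + s • w) x
    rw [add_sub_cancel_left, norm_smul, Real.norm_of_nonneg hs0] at hlip
    calc ⟪gradient f (x + s • w), w⟫
        = ⟪gradient f x, w⟫ + ⟪gradient f (x + s • w) - gradient f x, w⟫ := by
          rw [inner_sub_left]; ring
      _ ≤ ⟪gradient f x, w⟫ + α * (s * ‖w‖) * ‖w‖ := by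
          gcongr
          exact (real_inner_le_norm _ _).trans (by gcongr)
      _ = ⟪gradient f x, w⟫ + α * s * ‖w‖ ^ 2 := by ring
  have key := image_le_of_deriv_right_le_deriv_boundary
    (fun s _ => (hf.hasDerivAt_comp_add_smul x w s).continuousAt.continuousWithinAt)
    (fun s _ => (hf.hasDerivAt_comp_add_smul x w s).hasDerivWithinAt)
    (by simp) (fun s _ => (hB s).continuousAt.continuousWithinAt)
    (fun s _ => (hB s).hasDerivWithinAt) bound (right_mem_Icc.2 zero_le_one)
  simpa [w] using key

theorem inner_sub_gradient_le_of_forall_abs_sub_le {h : E → ℝ} {s : Set E} {ε : ℝ}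
    (hf : Differentiable ℝ f) (hsmooth : ∀ x y, ‖gradient f x - gradient f y‖ ≤ α * ‖x - y‖)
    (hclose : ∀ z ∈ s, |h z - f z| ≤ ε) {x g : E} (hg : ∀ y ∈ s, h x + ⟪g, y - x⟫ ≤ h y)
    {y : E} (hx : x ∈ s) (hy : y ∈ s) :
    ⟪g - gradient f x, y - x⟫ ≤ α / 2 * ‖y - x‖ ^ 2 + 2 * ε := by
  have hfy := hf.le_add_inner_gradient_add_of_lipschitz_gradient hsmooth x y
  have hx' := abs_le.1 (hclose x hx)
  have hy' := abs_le.1 (hclose y hy)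
  rw [inner_sub_left]
  linarith [hg y hy]

end InnerProductSpace

theorem le_two_mul_sqrt_mul_of_forall_mul_le {a α ε R : ℝ} (hR : 0 < R) (hε : 0 ≤ ε)
    (hεα : ε ≤ α * R ^ 2) (h : ∀ t, 0 < t → t ≤ 2 * R → t * a ≤ α / 2 * t ^ 2 + 2 * ε) :
    a ≤ 2 * √(α * ε) := by
  rcases hε.eq_or_lt with rfl | hε
  · rw [mul_zero, Real.sqrt_zero, mul_zero]
    have hlim : Filter.Tendsto (fun t : ℝ => α / 2 * t) (𝓝[>] 0) (𝓝 0) := by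
      simpa using ((continuous_const_mul (α / 2)).tendsto 0).mono_left nhdsWithin_le_nhds
    refine ge_of_tendsto hlim ?_
    filter_upwards [Ioo_mem_nhdsGT (by positivity : (0 : ℝ) < 2 * R)] with t ⟨ht, htR⟩
    refine le_of_mul_le_mul_left ?_ ht
    linarith [h t ht htR.le]
  · have hα : 0 < α := pos_of_mul_pos_left (hε.trans_le hεα) (by positivity)
    set r := √(α * ε)
    have hr : 0 < r := Real.sqrt_pos.2 (mul_pos hα hε)
    have hr2 : r ^ 2 = α * ε := Real.sq_sqrt (mul_pos hα hε).le
    have hrR : r ≤ α * R := Real.sqrt_le_iff.2 ⟨by positivity, by nlinarith⟩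
    -- `t = 2√(αε)/α = 2√(ε/α)`
    have key := h (2 * r / α) (by positivity) (by rw [div_le_iff₀ hα]; linarith)
    have hval : α / 2 * (2 * r / α) ^ 2 + 2 * ε = 2 * r / α * (2 * r) := by
      field_simp
      rw [hr2]
      ring
    exact le_of_mul_le_mul_left (key.trans_eq hval) (by positivity)

theorem stmt4_general {d : ℕ} (R ε α : ℝ) (hR : 0 < R) (hε : 0 ≤ ε)
    (hεα : ε ≤ α * R ^ 2)
    (f h : EuclideanSpace ℝ (Fin d) → ℝ)
    (hfdiff : Differentiable ℝ f)
    (hsmooth : ∀ x y, ‖gradient f x - gradient f y‖ ≤ α * ‖x - y‖)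
    (hclose : ∀ x ∈ closedBall (0 : EuclideanSpace ℝ (Fin d)) (4 * R), |h x - f x| ≤ ε)
    (x : EuclideanSpace ℝ (Fin d)) (hx : x ∈ closedBall (0 : EuclideanSpace ℝ (Fin d)) (2 * R))
    (g : EuclideanSpace ℝ (Fin d))
    (hg : ∀ y ∈ closedBall (0 : EuclideanSpace ℝ (Fin d)) (4 * R), h x + ⟪g, y - x⟫ ≤ h y) :
    ‖g - gradient f x‖ ≤ 2 * Real.sqrt (α * ε) := by
  set v := g - gradient f x
  rcases eq_or_ne v 0 with hv | hv
  · rw [hv, norm_zero]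
    positivity
  refine le_two_mul_sqrt_mul_of_forall_mul_le hR hε hεα fun t ht htR => ?_
  set y := x + (t / ‖v‖) • v
  have hyx : y - x = (t / ‖v‖) • v := add_sub_cancel_left _ _
  have hnorm : ‖y - x‖ = t := by
    rw [hyx, norm_smul, Real.norm_of_nonneg (by positivity),
      div_mul_cancel₀ _ (norm_ne_zero_iff.2 hv)]
  have hinner : ⟪v, y - x⟫ = t * ‖v‖ := by
    rw [hyx, real_inner_smul_right, real_inner_self_eq_norm_sq]
    field_simp
  have hx4 : x ∈ closedBall 0 (4 * R) := closedBall_subset_closedBall (by linarith) hx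
  have hy4 : y ∈ closedBall 0 (4 * R) := by
    rw [mem_closedBall_zero_iff] at hx ⊢
    calc ‖y‖ ≤ ‖x‖ + ‖y - x‖ := norm_le_norm_add_norm_sub' y x
      _ ≤ 4 * R := by linarith
  have key : ⟪v, y - x⟫ ≤ α / 2 * ‖y - x‖ ^ 2 + 2 * ε :=
    inner_sub_gradient_le_of_forall_abs_sub_le hfdiff hsmooth hclose hg hx4 hy4
  rwa [hinner, hnorm] at key

theorem stmt4 {d : ℕ} (R ε α : ℝ) (hR : 0 < R) (hε : 0 ≤ ε) (hα : 0 ≤ α)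
    (hεα : ε ≤ α * R ^ 2)
    (f h : EuclideanSpace ℝ (Fin d) → ℝ)
    (hfconv : ConvexOn ℝ Set.univ f)
    (hfdiff : Differentiable ℝ f)
    (hsmooth : ∀ x y, ‖gradient f x - gradient f y‖ ≤ α * ‖x - y‖)
    (hhconv : ConvexOn ℝ (closedBall (0 : EuclideanSpace ℝ (Fin d)) (4 * R)) h)
    (hclose : ∀ x ∈ closedBall (0 : EuclideanSpace ℝ (Fin d)) (4 * R), |h x - f x| ≤ ε)
    (x : EuclideanSpace ℝ (Fin d)) (hx : x ∈ closedBall (0 : EuclideanSpace ℝ (Fin d)) (2 * R))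
    (g : EuclideanSpace ℝ (Fin d))
    (hg : ∀ y ∈ closedBall (0 : EuclideanSpace ℝ (Fin d)) (4 * R), h x + ⟪g, y - x⟫ ≤ h y) :
    ‖g - gradient f x‖ ≤ 2 * Real.sqrt (α * ε) :=
  stmt4_general R ε α hR hε hεα f h hfdiff hsmooth hclose x hx g hg
end

section
/- Let C ⊆ B(0,R) ⊆ ℝ^d be a convex set, η > 0, and define C_{-η} = {x ∈ C : B(x,η) ⊆ C}. Let x_t ∉ C, let g be a unit vector with ⟨g, x⟩ ≤ ⟨g, x_t⟩ for all x ∈ C (an exact separating direction), and let ĝ be a unit vector with ‖ĝ - g‖ ≤ η/(2R). Then the halfspace H(ĝ, x_t) = {x : ⟨ĝ, x⟩ ≤ ⟨ĝ, x_t⟩} contains C_{-η}. -/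
open Metric
open scoped RealInnerProductSpace

/-!
A point `y` whose `η`-ball lies in `C` sits at depth `η` below every supporting halfspace of
`C`: testing the separation inequality at `y + η • g` gives `⟪g, y⟫ + η ≤ ⟪g, xₜ⟫`. Replacing `g`
by `ĝ` changes `⟪·, y - xₜ⟫` by at most `‖ĝ - g‖ * ‖y - xₜ‖ ≤ (η / 2R) * 2R = η`, which that
margin absorbs.
-/

section

variable {E : Type*} [NormedAddCommGroup E] [InnerProductSpace ℝ E]

theorem inner_add_le_of_closedBall_subset {C : Set E} {g y : E} {η c : ℝ} (hη : 0 ≤ η)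
    (hg : ‖g‖ = 1) (hball : closedBall y η ⊆ C) (hsep : ∀ x ∈ C, ⟪g, x⟫ ≤ c) :
    ⟪g, y⟫ + η ≤ c := by
  have hmem : y + η • g ∈ C :=
    hball (by simp [mem_closedBall, dist_eq_norm, norm_smul, hg, abs_of_nonneg hη])
  have := hsep _ hmem
  rwa [inner_add_right, real_inner_smul_right, real_inner_self_eq_norm_sq, hg, one_pow,
    mul_one] at this

theorem inner_sub_inner_le_add_norm_mul_norm (g g' x y : E) :
    ⟪g', y⟫ - ⟪g', x⟫ ≤ ⟪g, y⟫ - ⟪g, x⟫ + ‖g' - g‖ * ‖y - x‖ := by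
  have hsplit : ⟪g', y⟫ - ⟪g', x⟫ = ⟪g, y⟫ - ⟪g, x⟫ + ⟪g' - g, y - x⟫ := by
    simp only [inner_sub_left, inner_sub_right]; ring
  rw [hsplit]
  gcongr
  exact real_inner_le_norm _ _

end

theorem stmt10_general {d : ℕ} (R η : ℝ) (hR : 0 < R) (hη : 0 < η)
    (C : Set (EuclideanSpace ℝ (Fin d)))
    (hCR : C ⊆ closedBall (0 : EuclideanSpace ℝ (Fin d)) R)
    (xt : EuclideanSpace ℝ (Fin d)) (hxt : xt ∈ closedBall (0 : EuclideanSpace ℝ (Fin d)) R)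
    (g gh : EuclideanSpace ℝ (Fin d)) (hg1 : ‖g‖ = 1)
    (hsep : ∀ x ∈ C, ⟪g, x⟫ ≤ ⟪g, xt⟫)
    (hclose : ‖gh - g‖ ≤ η / (2 * R)) :
    ∀ y ∈ {x ∈ C | closedBall x η ⊆ C}, ⟪gh, y⟫ ≤ ⟪gh, xt⟫ := by
  rintro y ⟨hyC, hball⟩
  have hdeep := inner_add_le_of_closedBall_subset hη.le hg1 hball hsep
  have hdist : ‖y - xt‖ ≤ 2 * R := by
    have hy := mem_closedBall_zero_iff.mp (hCR hyC)
    have hx := mem_closedBall_zero_iff.mp hxt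
    linarith [norm_sub_le y xt]
  have hperturb : ‖gh - g‖ * ‖y - xt‖ ≤ η :=
    calc ‖gh - g‖ * ‖y - xt‖ ≤ η / (2 * R) * (2 * R) :=
          mul_le_mul hclose hdist (norm_nonneg _) (by positivity)
      _ = η := by field_simp
  linarith [inner_sub_inner_le_add_norm_mul_norm g gh xt y]

theorem stmt10 {d : ℕ} (R η : ℝ) (hR : 0 < R) (hη : 0 < η)
    (C : Set (EuclideanSpace ℝ (Fin d))) (hC : Convex ℝ C)
    (hCR : C ⊆ closedBall (0 : EuclideanSpace ℝ (Fin d)) R)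
    (xt : EuclideanSpace ℝ (Fin d)) (hxt : xt ∈ closedBall (0 : EuclideanSpace ℝ (Fin d)) R)
    (hxtC : xt ∉ C)
    (g gh : EuclideanSpace ℝ (Fin d)) (hg1 : ‖g‖ = 1)
    (hsep : ∀ x ∈ C, ⟪g, x⟫ ≤ ⟪g, xt⟫)
    (hgh1 : ‖gh‖ = 1) (hclose : ‖gh - g‖ ≤ η / (2 * R)) :
    ∀ y ∈ {x ∈ C | closedBall x η ⊆ C}, ⟪gh, y⟫ ≤ ⟪gh, xt⟫ :=
  stmt10_general R η hR hη C hCR xt hxt g gh hg1 hsep hclose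
end
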